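/- arXiv:1603.09330 — 2 statements merged into one kernel-verified Lean document; each statement's English description precedes it below -/
import Mathlib

section
/- Let C, C' be triangulated categories with weight structures w, w', and let F : C ⇄ C' : G be an adjoint pair of exact (triangulated) functors. Assume w is generated by a class P ⊆ Obj C, i.e., C_{w≥0} = (∪_{i>0} P[-i])^⊥. Then the following are equivalent: (i) F is left weight-exact, i.e., F(C_{w≤0}) ⊆ C'_{w'≤0}; (ii) F(P) ⊆ C'_{w'≤0}; (iii) G is right weight-exact, i.e., G(C'_{w'≥0}) ⊆ C_{w≥0}. -/
open CategoryTheory CategoryTheory.Limits CategoryTheory.Pretriangulated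

universe v u

/-- A weight structure on a (pre)triangulated category, in the homological convention. -/
structure WeightStructure (C : Type u) [Category.{v} C] [Preadditive C] [HasZeroObject C]
    [HasShift C ℤ] [∀ n : ℤ, (shiftFunctor C n).Additive] [Pretriangulated C] where
  LE : Set C
  GE : Set C
  retract_LE : ∀ ⦃X Y : C⦄, Y ∈ LE → ∀ (i : X ⟶ Y) (r : Y ⟶ X), i ≫ r = 𝟙 X → X ∈ LE
  retract_GE : ∀ ⦃X Y : C⦄, Y ∈ GE → ∀ (i : X ⟶ Y) (r : Y ⟶ X), i ≫ r = 𝟙 X → X ∈ GE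
  shift_LE : ∀ ⦃X : C⦄, X ∈ LE → X⟦(-1 : ℤ)⟧ ∈ LE
  shift_GE : ∀ ⦃X : C⦄, X ∈ GE → X⟦(1 : ℤ)⟧ ∈ GE
  orth : ∀ ⦃X Y : C⦄, X ∈ LE → Y ∈ GE → ∀ f : X ⟶ Y⟦(1 : ℤ)⟧, f = 0
  decomp : ∀ M : C, ∃ (X Y : C) (f : X ⟶ M) (g : M ⟶ Y) (h : Y ⟶ X⟦(1 : ℤ)⟧),
    (Triangle.mk f g h ∈ distTriang C) ∧ X ∈ LE ∧ Y⟦(-1 : ℤ)⟧ ∈ GE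

variable {C : Type u} [Category.{v} C] [Preadditive C] [HasZeroObject C]
    [HasShift C ℤ] [∀ n : ℤ, (shiftFunctor C n).Additive] [Pretriangulated C]

/-- `C_{w ≤ n} = C_{w ≤ 0}[n]`. -/
def WeightStructure.LEdeg (w : WeightStructure C) (n : ℤ) : Set C := {X | X⟦(-n)⟧ ∈ w.LE}

/-- `C_{w ≥ n} = C_{w ≥ 0}[n]`. -/
def WeightStructure.GEdeg (w : WeightStructure C) (n : ℤ) : Set C := {X | X⟦(-n)⟧ ∈ w.GE}

variable {C' : Type*} [Category C'] [Preadditive C'] [HasZeroObject C']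
    [HasShift C' ℤ] [∀ n : ℤ, (shiftFunctor C' n).Additive] [Pretriangulated C']

/-!
The adjunction and the commutation of `G` with shifts give `Hom(F X, N[i]) ≃ Hom(X[-i], G N)`.
If `F(P) ⊆ C'_{w'≤0}` and `N ∈ C'_{w'≥0}`, the left side vanishes for `X ∈ P`, `i > 0`, so `G N`
is orthogonal to `P[-i]`, i.e. lies in `C_{w≥0}` since `w` is generated by `P`. If `G` is right
weight-exact and `M ∈ C_{w≤0}`, then `F M` is left orthogonal to `C'_{w'≥1}`, which characterises
`C'_{w'≤0}`; the same characterisation puts `P` inside `C_{w≤0}`.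
-/

lemma CategoryTheory.Limits.eq_zero_of_homEquiv {D D' : Type*} [Category D] [Category D']
    [Preadditive D] [Preadditive D'] {A B : D} {A' B' : D'} (e : (A ⟶ B) ≃ (A' ⟶ B'))
    (h : ∀ g : A' ⟶ B', g = 0) (f : A ⟶ B) : f = 0 :=
  e.injective ((h _).trans (h _).symm)

def CategoryTheory.Adjunction.shiftHomEquiv {F : C ⥤ C'} {G : C' ⥤ C} [G.CommShift ℤ]
    (adj : F ⊣ G) (X : C) (Y : C') (i : ℤ) : (F.obj X ⟶ Y⟦i⟧) ≃ (X ⟶ (G.obj Y)⟦i⟧) :=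
  (adj.homEquiv _ _).trans ((Iso.refl X).homCongr ((G.commShiftIso i).app Y))

namespace WeightStructure

variable (w : WeightStructure C)

def IsGeneratedBy (P : Set C) : Prop :=
  w.GE = {Y : C | ∀ X ∈ P, ∀ i : ℤ, 0 < i → ∀ f : X⟦(-i)⟧ ⟶ Y, f = 0}

lemma mem_GE_of_iso {X Y : C} (e : X ≅ Y) (h : Y ∈ w.GE) : X ∈ w.GE :=
  w.retract_GE h e.hom e.inv e.hom_inv_id

lemma shift_nat_mem_GE {Y : C} (h : Y ∈ w.GE) (n : ℕ) : Y⟦(n : ℤ)⟧ ∈ w.GE := by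
  induction n with
  | zero => exact w.mem_GE_of_iso ((shiftFunctorZero' C ((0 : ℕ) : ℤ) rfl).app Y) h
  | succ n ih =>
      exact w.mem_GE_of_iso
        ((shiftFunctorAdd' C (n : ℤ) 1 ((n + 1 : ℕ) : ℤ) (by push_cast; rfl)).app Y)
        (w.shift_GE ih)

lemma hom_eq_zero_of_LE_of_GE_shift {X Y : C} (hX : X ∈ w.LE) (hY : Y ∈ w.GE)
    {i : ℤ} (hi : 0 < i) (f : X ⟶ Y⟦i⟧) : f = 0 := by
  obtain ⟨n, rfl⟩ : ∃ n : ℕ, i = (n : ℤ) + 1 := ⟨(i - 1).toNat, by omega⟩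
  exact eq_zero_of_homEquiv
    ((Iso.refl X).homCongr ((shiftFunctorAdd' C (n : ℤ) 1 _ rfl).app Y))
    (w.orth hX (w.shift_nat_mem_GE hY n)) f

/-- The weight decomposition `X → M → Y` of `M` splits when `M` is left orthogonal to
`C_{w≥1}`, making `M` a retract of `X`. -/
lemma mem_LE_iff (M : C) :
    M ∈ w.LE ↔ ∀ Y ∈ w.GE, ∀ f : M ⟶ Y⟦(1 : ℤ)⟧, f = 0 := by
  refine ⟨fun hM Y hY f => w.orth hM hY f, fun h => ?_⟩
  obtain ⟨X, Y, f, g, δ, hT, hX, hY⟩ := w.decomp M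
  have hg : g = 0 :=
    eq_zero_of_homEquiv ((Iso.refl M).homCongr (shiftNegShift Y (1 : ℤ)).symm) (h _ hY) g
  obtain ⟨r, hr⟩ := Triangle.coyoneda_exact₂ _ hT (𝟙 M) ((Category.id_comp g).trans hg)
  exact w.retract_LE hX r f hr.symm

lemma subset_LE_of_isGeneratedBy {P : Set C} (hP : w.IsGeneratedBy P) : P ⊆ w.LE := by
  intro X hX
  refine (w.mem_LE_iff X).2 fun Y hY => ?_
  rw [hP] at hY
  exact eq_zero_of_homEquiv ((shiftEquiv' C (-1) 1 (by simp)).toAdjunction.homEquiv X Y).symm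
    (hY X hX 1 one_pos)

end WeightStructure

section Adjunction

variable {w : WeightStructure C} {w' : WeightStructure C'} {F : C ⥤ C'} {G : C' ⥤ C}
  [G.CommShift ℤ]

lemma left_weight_exact_of_right_weight_exact (adj : F ⊣ G)
    (hG : ∀ N ∈ w'.GE, G.obj N ∈ w.GE) : ∀ M ∈ w.LE, F.obj M ∈ w'.LE := fun M hM =>
  (w'.mem_LE_iff _).2 fun Y hY =>
    eq_zero_of_homEquiv (adj.shiftHomEquiv M Y 1) (w.orth hM (hG Y hY))

lemma right_weight_exact_of_generators (adj : F ⊣ G) {P : Set C} (hP : w.IsGeneratedBy P)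
    (hF : ∀ X ∈ P, F.obj X ∈ w'.LE) : ∀ N ∈ w'.GE, G.obj N ∈ w.GE := by
  intro N hN
  rw [hP]
  intro X hX i hi
  exact eq_zero_of_homEquiv
    (((shiftEquiv' C (-i) i (by simp)).toAdjunction.homEquiv X (G.obj N)).trans
      (adj.shiftHomEquiv X N i).symm)
    (w'.hom_eq_zero_of_LE_of_GE_shift (hF X hX) hN hi)

end Adjunction

theorem left_weight_exact_iff_generators_iff_right_weight_exact_general
    (w : WeightStructure C) (w' : WeightStructure C')
    (F : C ⥤ C') (G : C' ⥤ C) [G.CommShift ℤ] (adj : F ⊣ G)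
    (P : Set C)
    (hgen : w.GE = {Y : C | ∀ X ∈ P, ∀ i : ℤ, 0 < i → ∀ f : X⟦(-i)⟧ ⟶ Y, f = 0}) :
    ((∀ M ∈ w.LE, F.obj M ∈ w'.LE) ↔ (∀ X ∈ P, F.obj X ∈ w'.LE)) ∧
    ((∀ M ∈ w.LE, F.obj M ∈ w'.LE) ↔ (∀ N ∈ w'.GE, G.obj N ∈ w.GE)) := by
  have hP : P ⊆ w.LE := w.subset_LE_of_isGeneratedBy hgen
  have gen_to_right : (∀ X ∈ P, F.obj X ∈ w'.LE) → ∀ N ∈ w'.GE, G.obj N ∈ w.GE :=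
    right_weight_exact_of_generators adj hgen
  have right_to_left : (∀ N ∈ w'.GE, G.obj N ∈ w.GE) → ∀ M ∈ w.LE, F.obj M ∈ w'.LE :=
    left_weight_exact_of_right_weight_exact adj
  exact ⟨⟨fun hI X hX => hI X (hP hX), fun hII => right_to_left (gen_to_right hII)⟩,
    ⟨fun hI => gen_to_right fun X hX => hI X (hP hX), right_to_left⟩⟩

/-- For an adjoint pair `F ⊣ G` of exact functors, where the weight structure on the source is
generated by a class `P`, the following are equivalent: `F` is left weight-exact;
`F(P) ⊆ C'_{w'≤0}`; `G` is right weight-exact. -/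
theorem left_weight_exact_iff_generators_iff_right_weight_exact
    (w : WeightStructure C) (w' : WeightStructure C')
    (F : C ⥤ C') (G : C' ⥤ C) [F.CommShift ℤ] [G.CommShift ℤ]
    [F.IsTriangulated] [G.IsTriangulated] (adj : F ⊣ G)
    (P : Set C)
    (hgen : w.GE = {Y : C | ∀ X ∈ P, ∀ i : ℤ, 0 < i → ∀ f : X⟦(-i)⟧ ⟶ Y, f = 0}) :
    ((∀ M ∈ w.LE, F.obj M ∈ w'.LE) ↔ (∀ X ∈ P, F.obj X ∈ w'.LE)) ∧
    ((∀ M ∈ w.LE, F.obj M ∈ w'.LE) ↔ (∀ N ∈ w'.GE, G.obj N ∈ w.GE)) :=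
  left_weight_exact_iff_generators_iff_right_weight_exact_general w w' F G adj P hgen
end

section
/- Let C be a triangulated category with weight structure w, let M ∈ C_{w≤0} and N ∈ C_{w≥0}. Choose a weight decomposition X₁[1] → M[1] → Y₁[1] → X₁[2] of M[1] (with X₁ ∈ C_{w≤0}, Y₁[1] ∈ C_{w≥1}), and a weight decomposition X₂ → N → Y → X₂[1] of N (with X₂ ∈ C_{w≤0}, Y ∈ C_{w≥1}). Then Y₁ and X₂ belong to the heart C_{w=0}, and every morphism M → N factors as g ∘ h ∘ f, where f : M → Y₁ comes from the first decomposition, g : X₂ → N from the second, and h : Y₁ → X₂ is some morphism. -/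
/-!
`C_{w≤0}` and `C_{w≥0}` are the orthogonals of `C_{w≥0}[1]` and `C_{w≤0}[1]`, which puts `Y₁`
(as `Y₁[1]` is an extension of `M[1]` and `X₁[2]`) and `X₂` (an extension of `Y[-1]` and `N`) in
the heart. A morphism `M ⟶ N` kills `N ⟶ Y` since `Y ∈ C_{w≥1}`, so it lifts to `X₂`; that lift
kills `X₁[1] ⟶ M[1]` since `X₂ ∈ C_{w≥0}`, so it factors through `f`.
-/

open CategoryTheory CategoryTheory.Limits CategoryTheory.Pretriangulated

universe v u

variable {C : Type u} [Category.{v} C] [Preadditive C] [HasZeroObject C]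
    [HasShift C ℤ] [∀ n : ℤ, (shiftFunctor C n).Additive] [Pretriangulated C]

namespace WeightStructure

variable (w : WeightStructure C)

lemma orth_of_shift_neg_one_mem_GE {X Y : C} (hX : X ∈ w.LE) (hY : Y⟦(-1 : ℤ)⟧ ∈ w.GE)
    (f : X ⟶ Y) : f = 0 := by
  let e : Y⟦(-1 : ℤ)⟧⟦(1 : ℤ)⟧ ≅ Y := (shiftFunctorCompIsoId C (-1 : ℤ) 1 (by ring)).app Y
  exact (cancel_mono e.inv).1 (by rw [zero_comp]; exact w.orth hX hY _)

lemma orth_shift_one {X Y : C} (hX : X ∈ w.LE) (hY : Y ∈ w.GE)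
    (f : X⟦(1 : ℤ)⟧ ⟶ Y⟦(1 : ℤ)⟧⟦(1 : ℤ)⟧) : f = 0 := by
  obtain ⟨f', rfl⟩ := (shiftFunctor C (1 : ℤ)).map_surjective f
  rw [w.orth hX hY f', Functor.map_zero]

/-- A weight decomposition of `Z[1]` has vanishing first map, so it exhibits `Z[1]` as a retract
of its `C_{w≥1}` part. -/
lemma mem_GE_of_orth {Z : C} (h : ∀ A ∈ w.LE, ∀ f : A ⟶ Z⟦(1 : ℤ)⟧, f = 0) : Z ∈ w.GE := by
  obtain ⟨X, Y, a, b, c, hT, hX, hY⟩ := w.decomp (Z⟦(1 : ℤ)⟧)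
  obtain ⟨r, hr⟩ := Triangle.yoneda_exact₂ _ hT (𝟙 (Z⟦(1 : ℤ)⟧))
    (by rw [Triangle.mk_mor₁, h X hX a]; exact zero_comp)
  have hretract : Z⟦(1 : ℤ)⟧⟦(-1 : ℤ)⟧ ∈ w.GE :=
    w.retract_GE hY (b⟦(-1 : ℤ)⟧') (r⟦(-1 : ℤ)⟧')
      (((shiftFunctor C (-1)).map_comp b r).symm.trans
        ((congrArg _ hr.symm).trans ((shiftFunctor C (-1)).map_id _)))
  let e : Z⟦(1 : ℤ)⟧⟦(-1 : ℤ)⟧ ≅ Z := (shiftFunctorCompIsoId C (1 : ℤ) (-1) (by ring)).app Z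
  exact w.retract_GE hretract e.inv e.hom e.inv_hom_id

/-- A weight decomposition of `Z` has vanishing second map, so it exhibits `Z` as a retract
of its `C_{w≤0}` part. -/
lemma mem_LE_of_orth {Z : C} (h : ∀ B ∈ w.GE, ∀ f : Z ⟶ B⟦(1 : ℤ)⟧, f = 0) : Z ∈ w.LE := by
  obtain ⟨X, Y, a, b, c, hT, hX, hY⟩ := w.decomp Z
  have hb : b = 0 := by
    let e : Y⟦(-1 : ℤ)⟧⟦(1 : ℤ)⟧ ≅ Y := (shiftFunctorCompIsoId C (-1 : ℤ) 1 (by ring)).app Y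
    exact (cancel_mono e.inv).1 (by rw [zero_comp]; exact h _ hY _)
  obtain ⟨s, hs⟩ := Triangle.coyoneda_exact₂ _ hT (𝟙 Z)
    (by rw [Triangle.mk_mor₂, hb]; exact comp_zero)
  exact w.retract_LE hX s a hs.symm

lemma mem_LE_of_distTriang_shift_one {A M Y : C} (α : A ⟶ M⟦(1 : ℤ)⟧) (f : M ⟶ Y)
    (γ : Y⟦(1 : ℤ)⟧ ⟶ A⟦(1 : ℤ)⟧) (hT : Triangle.mk α (f⟦(1 : ℤ)⟧') γ ∈ distTriang C)
    (hA : A ∈ w.LE) (hM : M ∈ w.LE) : Y ∈ w.LE := by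
  refine w.mem_LE_of_orth fun B hB u => (shiftFunctor C (1 : ℤ)).map_eq_zero_iff.1 ?_
  obtain ⟨k, hk⟩ := Triangle.yoneda_exact₃ _ hT (u⟦(1 : ℤ)⟧')
    (((shiftFunctor C (1 : ℤ)).map_comp f u).symm.trans
      ((congrArg _ (w.orth hM hB (f ≫ u))).trans ((shiftFunctor C (1 : ℤ)).map_zero _ _)))
  rw [hk, w.orth_shift_one hA hB k]
  exact comp_zero

lemma mem_GE_of_distTriang {X N Y : C} (g : X ⟶ N) (p : N ⟶ Y) (d : Y ⟶ X⟦(1 : ℤ)⟧)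
    (hT : Triangle.mk g p d ∈ distTriang C) (hN : N ∈ w.GE) (hY : Y⟦(-1 : ℤ)⟧ ∈ w.GE) :
    X ∈ w.GE := by
  refine w.mem_GE_of_orth fun A hA φ => ?_
  obtain ⟨ψ, rfl⟩ := Triangle.coyoneda_exact₁ _ hT φ (w.orth hA hN _)
  rw [w.orth_of_shift_neg_one_mem_GE hA hY ψ]
  exact zero_comp

lemma exists_lift_of_distTriang {M X N Y : C} (g : X ⟶ N) (p : N ⟶ Y) (d : Y ⟶ X⟦(1 : ℤ)⟧)
    (hT : Triangle.mk g p d ∈ distTriang C) (hM : M ∈ w.LE) (hY : Y⟦(-1 : ℤ)⟧ ∈ w.GE)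
    (φ : M ⟶ N) : ∃ h : M ⟶ X, φ = h ≫ g :=
  Triangle.coyoneda_exact₂ _ hT φ (w.orth_of_shift_neg_one_mem_GE hM hY _)

lemma exists_desc_of_distTriang_shift_one {A M Y X : C} (α : A ⟶ M⟦(1 : ℤ)⟧) (f : M ⟶ Y)
    (γ : Y⟦(1 : ℤ)⟧ ⟶ A⟦(1 : ℤ)⟧) (hT : Triangle.mk α (f⟦(1 : ℤ)⟧') γ ∈ distTriang C)
    (hA : A ∈ w.LE) (hX : X ∈ w.GE) (h : M ⟶ X) : ∃ h' : Y ⟶ X, h = f ≫ h' := by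
  obtain ⟨k, hk⟩ := Triangle.yoneda_exact₂ _ hT (h⟦(1 : ℤ)⟧') (w.orth hA hX _)
  obtain ⟨h', rfl⟩ := (shiftFunctor C (1 : ℤ)).map_surjective k
  exact ⟨h', (shiftFunctor C (1 : ℤ)).map_injective (hk.trans (Functor.map_comp _ _ _).symm)⟩

end WeightStructure

/-- Given `M ∈ C_{w≤0}`, `N ∈ C_{w≥0}`, a weight decomposition
`X₁[1] → M[1] → Y₁[1] → X₁[2]` of `M[1]` and a weight decomposition `X₂ → N → Y → X₂[1]` of `N`,
the objects `Y₁` and `X₂` lie in the heart `C_{w=0}`, and every morphism `M ⟶ N` factors as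
`g ∘ h ∘ f` where `f : M ⟶ Y₁` is induced by the first decomposition and `g : X₂ ⟶ N` is the
map of the second one. -/
theorem heart_factorization (w : WeightStructure C)
    (M N X₁ Y₁ X₂ Y : C) (hM : M ∈ w.LE) (hN : N ∈ w.GE)
    -- the weight decomposition `X₁[1] → M[1] → Y₁[1] → X₁[2]` of `M[1]`
    (α : X₁⟦(1 : ℤ)⟧ ⟶ M⟦(1 : ℤ)⟧) (β : M⟦(1 : ℤ)⟧ ⟶ Y₁⟦(1 : ℤ)⟧)
    (γ : Y₁⟦(1 : ℤ)⟧ ⟶ X₁⟦(1 : ℤ)⟧⟦(1 : ℤ)⟧)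
    (hT₁ : Triangle.mk α β γ ∈ distTriang C)
    (hX₁ : X₁⟦(1 : ℤ)⟧ ∈ w.LE) (hY₁ : Y₁ ∈ w.GE)
    (f : M ⟶ Y₁) (hf : (shiftFunctor C (1 : ℤ)).map f = β)
    -- the weight decomposition `X₂ → N → Y → X₂[1]` of `N`
    (g : X₂ ⟶ N) (p : N ⟶ Y) (d : Y ⟶ X₂⟦(1 : ℤ)⟧)
    (hT₂ : Triangle.mk g p d ∈ distTriang C)
    (hX₂ : X₂ ∈ w.LE) (hY : Y⟦(-1 : ℤ)⟧ ∈ w.GE) :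
    (Y₁ ∈ w.LE ∩ w.GE) ∧ (X₂ ∈ w.LE ∩ w.GE) ∧
    (∀ φ : M ⟶ N, ∃ h : Y₁ ⟶ X₂, φ = f ≫ h ≫ g) := by
  subst hf
  have hX₂GE : X₂ ∈ w.GE := w.mem_GE_of_distTriang g p d hT₂ hN hY
  refine ⟨⟨w.mem_LE_of_distTriang_shift_one α f γ hT₁ hX₁ hM, hY₁⟩, ⟨hX₂, hX₂GE⟩, fun φ => ?_⟩
  obtain ⟨h₀, rfl⟩ := w.exists_lift_of_distTriang g p d hT₂ hM hY φ
  obtain ⟨h, rfl⟩ := w.exists_desc_of_distTriang_shift_one α f γ hT₁ hX₁ hX₂GE h₀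
  exact ⟨h, Category.assoc _ _ _⟩
end
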